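/- For n ≥ 3, the symmetrized polydisc G_n is not ℂ-convex: for t ∈ [1/√2, 1), the intersection of G_n with the complex line L_t = {(3t(1-2λ), 3t², t³(1-2λ), 0, …, 0) : λ ∈ ℂ} is not connected. -/

import Mathlib

/-!
The real part of the first coordinate is continuous on `𝔾ₙ ∩ L_t` and equals `±3t` at the points
`πₙ(±t, ±t, ±t, 0, …, 0)` of `L_t` (where `λ = 0`, resp. `λ = 1`), so if the intersection were
connected it would contain a point `πₙ(μ)` of `L_t` with `s = 1 - 2λ` purely imaginary. Since
`e_k(μ) = 0` for `k ≥ 4`, the polynomial `∏ (X - μᵢ)` is `X^(n-3)` times a cubic whose roots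
`x, y, z` are among the `μᵢ`, and then
`x² + y² + z² = e₁² - 2e₂ = 9t²s² - 6t² ≤ -6t² ≤ -3`,
which is impossible for three points of the open unit disc.
-/

open Metric Finset

/-- The map whose `k`-th component is the `(k+1)`-st elementary symmetric polynomial. -/
noncomputable def symPoly (n : ℕ) (μ : Fin n → ℂ) : Fin n → ℂ :=
  fun k => ∑ s ∈ Finset.powersetCard ((k : ℕ) + 1) Finset.univ, ∏ i ∈ s, μ i

/-- The symmetrized `n`-disc `𝔾ₙ = πₙ(𝔻ⁿ)`. -/
def symPolydisc (n : ℕ) : Set (Fin n → ℂ) :=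
  {z | ∃ μ : Fin n → ℂ, (∀ i, ‖μ i‖ < 1) ∧ symPoly n μ = z}

open Polynomial

namespace Multiset

theorem prod_X_sub_C_eq_X_pow_mul_cubic {R : Type*} [CommRing R] (M : Multiset R)
    (h3 : 3 ≤ card M) (hvanish : ∀ j, 4 ≤ j → M.esymm j = 0) :
    (M.map fun r => X - C r).prod =
      X ^ (card M - 3) * Cubic.toPoly ⟨1, -M.esymm 1, M.esymm 2, -M.esymm 3⟩ := by
  rw [prod_X_sub_X_eq_sum_esymm, ← Finset.sum_subset (Finset.range_subset_range.mpr
    (by omega : 4 ≤ card M + 1)) fun j hj hj4 => by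
      rw [hvanish j (by simp_all), C_0, zero_mul, mul_zero]]
  obtain ⟨m, hm⟩ : ∃ m, card M = m + 3 := ⟨card M - 3, by omega⟩
  have he0 : M.esymm 0 = 1 := by simp [esymm]
  simp only [hm, Finset.sum_range_succ, Finset.sum_range_zero, he0, Cubic.toPoly, map_neg, C_1,
    Nat.reduceSubDiff, Nat.sub_zero, Nat.add_sub_cancel]
  ring

theorem exists_three_mem_of_esymm_eq_zero {K : Type*} [Field K] [IsAlgClosed K] (M : Multiset K)
    (h3 : 3 ≤ card M) (hvanish : ∀ j, 4 ≤ j → M.esymm j = 0) :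
    ∃ x ∈ M, ∃ y ∈ M, ∃ z ∈ M,
      M.esymm 1 = x + y + z ∧ M.esymm 2 = x * y + x * z + y * z := by
  set Q : Cubic K := ⟨1, -M.esymm 1, M.esymm 2, -M.esymm 3⟩
  have hQa : Q.a ≠ 0 := one_ne_zero
  have hQM : Q.roots ≤ M := by
    have hprod := prod_X_sub_C_eq_X_pow_mul_cubic M h3 hvanish
    rw [← roots_multiset_prod_X_sub_C M]
    exact roots.le_of_dvd (monic_multiset_prod_of_monic _ _ fun r _ => monic_X_sub_C r).ne_zero
      (hprod ▸ dvd_mul_left _ _)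
  obtain ⟨x, y, z, hxyz⟩ := (Cubic.splits_iff_roots_eq_three (φ := RingHom.id K) hQa).mp
    (IsAlgClosed.splits _)
  have hb : -M.esymm 1 = 1 * -(x + y + z) := Cubic.b_eq_three_roots hQa hxyz
  have hc : M.esymm 2 = 1 * (x * y + x * z + y * z) := Cubic.c_eq_three_roots hQa hxyz
  rw [Cubic.map_roots, Polynomial.map_id] at hxyz
  have hmem : ∀ r ∈ ({x, y, z} : Multiset K), r ∈ M := fun r hr =>
    mem_of_le hQM (show r ∈ Q.toPoly.roots from hxyz ▸ hr)
  refine ⟨x, hmem x (by simp), y, hmem y (by simp), z, hmem z (by simp), ?_, ?_⟩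
  · linear_combination -hb
  · linear_combination hc

theorem norm_esymm_one_sq_sub_two_mul_esymm_two_lt (M : Multiset ℂ)
    (hM : ∀ r ∈ M, ‖r‖ < 1) (h3 : 3 ≤ card M) (hvanish : ∀ j, 4 ≤ j → M.esymm j = 0) :
    ‖M.esymm 1 ^ 2 - 2 * M.esymm 2‖ < 3 := by
  obtain ⟨x, hx, y, hy, z, hz, h1, h2⟩ := M.exists_three_mem_of_esymm_eq_zero h3 hvanish
  have hx := hM x hx
  have hy := hM y hy
  have hz := hM z hz
  calc ‖M.esymm 1 ^ 2 - 2 * M.esymm 2‖ = ‖x ^ 2 + y ^ 2 + z ^ 2‖ := by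
        rw [h1, h2]; congr 1; ring
    _ ≤ ‖x ^ 2‖ + ‖y ^ 2‖ + ‖z ^ 2‖ := norm_add₃_le
    _ = ‖x‖ ^ 2 + ‖y‖ ^ 2 + ‖z‖ ^ 2 := by simp only [norm_pow]
    _ < 3 := by nlinarith [norm_nonneg x, norm_nonneg y, norm_nonneg z]

end Multiset

theorem symPoly_apply_eq_esymm {n : ℕ} (μ : Fin n → ℂ) (k : Fin n) :
    symPoly n μ k = (univ.val.map μ).esymm (k + 1) :=
  (Finset.esymm_map_val μ univ _).symm

theorem symPoly_apply_ite_mem {n : ℕ} (F : Finset (Fin n)) (c : ℂ) (k : Fin n) :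
    symPoly n (fun i => if i ∈ F then c else 0) k =
      (#F).choose ((k : ℕ) + 1) * c ^ ((k : ℕ) + 1) := by
  rw [symPoly, ← sum_subset (powersetCard_mono (subset_univ F)) fun s hs hsF => ?_]
  · rw [sum_congr rfl fun s hs => ?_, sum_const, card_powersetCard, nsmul_eq_mul]
    obtain ⟨hsF, hcard⟩ := mem_powersetCard.1 hs
    rw [prod_congr rfl fun i hi => if_pos (hsF hi), prod_const, hcard]
  · obtain ⟨i, hi, hiF⟩ :=
      not_subset.1 fun h => hsF (mem_powersetCard.2 ⟨h, (mem_powersetCard.1 hs).2⟩)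
    exact prod_eq_zero hi (if_neg hiF)

def symLine (n : ℕ) (t : ℝ) (lam : ℂ) : Fin n → ℂ := fun i =>
  if (i : ℕ) = 0 then 3 * (t : ℂ) * (1 - 2 * lam)
  else if (i : ℕ) = 1 then 3 * (t : ℂ) ^ 2
  else if (i : ℕ) = 2 then (t : ℂ) ^ 3 * (1 - 2 * lam)
  else 0

theorem symPoly_ite_mem_eq_symLine {n : ℕ} {F : Finset (Fin n)} (hF : #F = 3) (t : ℝ) {ε : ℂ}
    (hε : ε ^ 2 = 1) :
    symPoly n (fun i => if i ∈ F then ε * t else 0) = symLine n t ((1 - ε) / 2) := by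
  funext ⟨k, hk⟩
  rw [symPoly_apply_ite_mem, hF]
  match k with
  | 0 =>
    simp only [zero_add, Nat.choose_one_right, Nat.cast_ofNat, pow_one, symLine, ↓reduceIte]
    ring
  | 1 => simp [symLine, mul_pow, hε]
  | 2 =>
    simp only [Nat.reduceAdd, Nat.choose_self, Nat.cast_one, one_mul, symLine, ↓reduceIte,
      OfNat.ofNat_ne_zero, OfNat.ofNat_ne_one]
    linear_combination (t : ℂ) ^ 3 * ε * hε
  | k + 3 => simp [symLine, Nat.choose_eq_zero_of_lt (by omega : 3 < k + 3 + 1)]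

theorem re_symLine_apply_zero_ne_zero {n : ℕ} (hn : 3 ≤ n) {t : ℝ} (ht : 1 / 2 ≤ t ^ 2)
    {lam : ℂ} (h : symLine n t lam ∈ symPolydisc n) :
    (symLine n t lam ⟨0, by omega⟩).re ≠ 0 := by
  obtain ⟨μ, hμ, hμL⟩ := h
  set M := univ.val.map μ
  have hcoord (k : Fin n) : M.esymm (k + 1) = symLine n t lam k := by
    rw [← symPoly_apply_eq_esymm, hμL]
  have hvanish (j : ℕ) (hj : 4 ≤ j) : M.esymm j = 0 := by
    rcases lt_or_ge n j with hjn | hjn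
    · simp [Multiset.esymm, Multiset.powersetCard_eq_empty j (s := M) (by simpa [M] using hjn)]
    · obtain ⟨k, rfl⟩ : ∃ k, j = k + 1 := ⟨j - 1, by omega⟩
      rw [hcoord ⟨k, by omega⟩]
      simp [symLine, show k ≠ 0 by omega, show k ≠ 1 by omega, show k ≠ 2 by omega]
  have hlt := M.norm_esymm_one_sq_sub_two_mul_esymm_two_lt (by simpa [M] using hμ)
    (by simpa [M] using hn) hvanish
  rw [hcoord ⟨0, by omega⟩, hcoord ⟨1, by omega⟩] at hlt
  set w := symLine n t lam ⟨0, by omega⟩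
  intro hre
  obtain ⟨y, hy⟩ : ∃ y : ℝ, w = y * Complex.I :=
    ⟨w.im, Complex.ext (by simp [hre]) (by simp)⟩
  -- for `w` purely imaginary, `w ^ 2 - 6 t ^ 2` is a real number `≤ -6 t ^ 2 ≤ -3`
  have hw : w ^ 2 - 2 * (3 * (t : ℂ) ^ 2) = ((-(y ^ 2 + 6 * t ^ 2) : ℝ) : ℂ) := by
    push_cast
    linear_combination (w + y * Complex.I) * hy + (y : ℂ) ^ 2 * Complex.I_sq
  rw [show symLine n t lam ⟨1, by omega⟩ = 3 * (t : ℂ) ^ 2 by simp [symLine], hw,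
    Complex.norm_real, Real.norm_eq_abs, abs_neg, abs_of_nonneg (by positivity)] at hlt
  nlinarith [sq_nonneg y]

theorem symLine_mem_symPolydisc {n : ℕ} (hn : 3 ≤ n) {t : ℝ} (ht : |t| < 1) {ε : ℂ}
    (hε : ε ^ 2 = 1) : symLine n t ((1 - ε) / 2) ∈ symPolydisc n := by
  obtain ⟨F, -, hF⟩ := exists_subset_card_eq (s := (univ : Finset (Fin n))) (by simpa using hn)
  have hε1 : ‖ε‖ = 1 :=
    (pow_eq_one_iff_of_nonneg (norm_nonneg ε) two_ne_zero).1 (by rw [← norm_pow, hε, norm_one])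
  refine ⟨_, fun i => ?_, symPoly_ite_mem_eq_symLine hF t hε⟩
  split_ifs <;> simp [hε1, ht]

/-- For `n ≥ 3` and `t ∈ [1/√2, 1)`, the intersection of `𝔾ₙ` with the complex line
`L_t = {(3t(1-2λ), 3t², t³(1-2λ), 0, …, 0) : λ ∈ ℂ}` is not connected; in particular
`𝔾ₙ` is not ℂ-convex. -/
theorem symPolydisc_not_Cconvex (n : ℕ) (hn : 3 ≤ n) (t : ℝ)
    (ht : t ∈ Set.Ico (1 / Real.sqrt 2) 1)
    (L : Set (Fin n → ℂ))
    (hL : L = {z | ∃ lam : ℂ, z = fun i : Fin n =>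
      if (i : ℕ) = 0 then 3 * (t : ℂ) * (1 - 2 * lam)
      else if (i : ℕ) = 1 then 3 * (t : ℂ) ^ 2
      else if (i : ℕ) = 2 then (t : ℂ) ^ 3 * (1 - 2 * lam)
      else 0}) :
    ¬ IsConnected (symPolydisc n ∩ L) := by
  obtain ⟨ht1, ht2⟩ := ht
  have ht0 : 0 < t := (by positivity : (0 : ℝ) < 1 / √2).trans_le ht1
  have ht_sq : 1 / 2 ≤ t ^ 2 := by
    simpa [div_pow] using pow_le_pow_left₀ (by positivity) ht1 2
  have hmem (ε : ℂ) (hε : ε ^ 2 = 1) : symLine n t ((1 - ε) / 2) ∈ symPolydisc n ∩ L :=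
    ⟨symLine_mem_symPolydisc hn (abs_lt.2 ⟨by linarith, ht2⟩) hε, hL ▸ ⟨_, rfl⟩⟩
  intro hconn
  obtain ⟨z, ⟨hzG, hzL⟩, hre⟩ := hconn.isPreconnected.intermediate_value
    (hmem (-1) (by norm_num)) (hmem 1 (by norm_num)) (f := fun z => (z ⟨0, by omega⟩).re)
    (by fun_prop)
    (show (0 : ℝ) ∈ Set.Icc _ _ from ⟨by norm_num [symLine, ht0.le], by simp [symLine, ht0.le]⟩)
  obtain ⟨lam, rfl⟩ := hL ▸ hzL
  exact re_symLine_apply_zero_ne_zero hn ht_sq hzG hre
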